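/- arXiv:2604.23613 — 4 statements merged into one kernel-verified Lean document; each statement's English description precedes it below -/
import Mathlib

section
/- Conditional Hoeffding's lemma: Let G be a sub-σ-field, X an integrable random variable with E[X | G] = 0, and c a nonnegative G-measurable random variable with |X| ≤ c almost surely. Then for every real λ, E[exp(λX) | G] ≤ exp(λ²c²/2) almost surely. -/
/-!
For `|x| ≤ c`, convexity of `exp` bounds `exp (l x)` by the chord through `±c`:
`exp (l x) ≤ cosh (l c) + (sinh (l c) / c) x`. Both coefficients are `G`-measurable, so
conditioning on `G` kills the term linear in `X` and leaves `cosh (l c) ≤ exp (l² c² / 2)`.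
The unbounded coefficients are handled by working on the `G`-measurable sets where they are
bounded.
-/

open MeasureTheory

namespace Real

theorem exp_mul_le_cosh_add_sinh_div_mul (l : ℝ) {x c : ℝ} (hx : |x| ≤ c) :
    exp (l * x) ≤ cosh (l * c) + sinh (l * c) / c * x := by
  rcases (abs_nonneg x |>.trans hx).eq_or_lt with rfl | hc
  · simp [abs_nonpos_iff.mp hx]
  obtain ⟨hxl, hxu⟩ := abs_le.mp hx
  -- `l x` is the convex combination of `∓ l c` with weights `(c ∓ x) / 2c`.
  have hw₁ : 0 ≤ (c - x) / (2 * c) := by apply div_nonneg <;> linarith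
  have hw₂ : 0 ≤ (c + x) / (2 * c) := by apply div_nonneg <;> linarith
  have hw : (c - x) / (2 * c) + (c + x) / (2 * c) = 1 := by field_simp; ring
  have hconv := convexOn_exp.2 (Set.mem_univ (-(l * c))) (Set.mem_univ (l * c)) hw₁ hw₂ hw
  have hcomb : (c - x) / (2 * c) * -(l * c) + (c + x) / (2 * c) * (l * c) = l * x := by
    field_simp; ring
  simp only [smul_eq_mul, hcomb] at hconv
  refine hconv.trans_eq ?_
  rw [cosh_eq, sinh_eq, exp_neg]
  field_simp
  ring

end Real

section

variable {Ω : Type*} {m mΩ : MeasurableSpace Ω} {P : Measure Ω} [IsFiniteMeasure P]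
  {X Y a b : Ω → ℝ}

theorem condExp_le_of_le_add_mul_of_bounded (hm : m ≤ mΩ) (hY : Integrable Y P)
    (hX : Integrable X P) (hXzero : P[X|m] =ᵐ[P] 0) (ha : StronglyMeasurable[m] a)
    (hb : StronglyMeasurable[m] b) {C : ℝ} (haC : ∀ ω, ‖a ω‖ ≤ C) (hbC : ∀ ω, ‖b ω‖ ≤ C)
    (hle : Y ≤ᵐ[P] a + b * X) :
    P[Y|m] ≤ᵐ[P] a := by
  have ha_int : Integrable a P := .of_bound (ha.mono hm).aestronglyMeasurable C (.of_forall haC)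
  have hbX_int : Integrable (b * X) P :=
    hX.bdd_mul (hb.mono hm).aestronglyMeasurable (.of_forall hbC)
  have hbX : P[b * X|m] =ᵐ[P] 0 := by
    filter_upwards [condExp_mul_of_stronglyMeasurable_left hb hbX_int hX, hXzero] with ω h h0
    simp [h, h0]
  calc P[Y|m] ≤ᵐ[P] P[a + b * X|m] := condExp_mono hY (ha_int.add hbX_int) hle
    _ =ᵐ[P] P[a|m] + P[b * X|m] := condExp_add ha_int hbX_int m
    _ =ᵐ[P] a := by
      filter_upwards [hbX] with ω h
      simp [h, condExp_of_stronglyMeasurable hm ha ha_int]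

theorem condExp_le_of_le_add_mul (hm : m ≤ mΩ) (hY : Integrable Y P)
    (hX : Integrable X P) (hXzero : P[X|m] =ᵐ[P] 0) (ha : StronglyMeasurable[m] a)
    (hb : StronglyMeasurable[m] b) (hle : Y ≤ᵐ[P] a + b * X) :
    P[Y|m] ≤ᵐ[P] a := by
  set S : ℕ → Set Ω := fun n => {ω | ‖a ω‖ ≤ n ∧ ‖b ω‖ ≤ n}
  have hS : ∀ n, MeasurableSet[m] (S n) := fun n =>
    (ha.norm.measurable measurableSet_Iic).inter (hb.norm.measurable measurableSet_Iic)
  have hloc : ∀ n, (S n).indicator (P[Y|m]) ≤ᵐ[P] (S n).indicator a := by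
    intro n
    refine (condExp_indicator hY (hS n)).symm.trans_le ?_
    refine condExp_le_of_le_add_mul_of_bounded hm (hY.indicator (hm _ (hS n))) hX hXzero
      (ha.indicator (hS n)) (hb.indicator (hS n)) (C := n) ?_ ?_ ?_
    · intro ω
      by_cases hω : ω ∈ S n
      · simpa [hω] using hω.1
      · simp [hω]
    · intro ω
      by_cases hω : ω ∈ S n
      · simpa [hω] using hω.2
      · simp [hω]
    · filter_upwards [hle] with ω h
      by_cases hω : ω ∈ S n
      · simpa [hω] using h
      · simp [hω]
  filter_upwards [ae_all_iff.mpr hloc] with ω h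
  obtain ⟨n, hn⟩ := exists_nat_ge (max ‖a ω‖ ‖b ω‖)
  have hω : ω ∈ S n := ⟨(le_max_left _ _).trans hn, (le_max_right _ _).trans hn⟩
  simpa [hω] using h n

end

theorem conditional_hoeffding_general
    {Ω : Type*} {mΩ : MeasurableSpace Ω} (P : Measure Ω) [IsProbabilityMeasure P]
    (G : MeasurableSpace Ω) (hG : G ≤ mΩ)
    (X : Ω → ℝ) (hX : Integrable X P) (hXzero : P[X|G] =ᵐ[P] 0)
    (c : Ω → ℝ) (hc : StronglyMeasurable[G] c)
    (hXc : ∀ᵐ ω ∂P, |X ω| ≤ c ω) (l : ℝ) :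
    P[fun ω => Real.exp (l * X ω)|G] ≤ᵐ[P] fun ω => Real.exp (l ^ 2 * c ω ^ 2 / 2) := by
  by_cases hint : Integrable (fun ω => Real.exp (l * X ω)) P
  swap
  · rw [condExp_of_not_integrable hint]
    exact .of_forall fun ω => (Real.exp_pos _).le
  have hcm : Measurable[G] c := hc.measurable
  have hcosh : P[fun ω => Real.exp (l * X ω)|G] ≤ᵐ[P] fun ω => Real.cosh (l * c ω) :=
    condExp_le_of_le_add_mul (b := fun ω => Real.sinh (l * c ω) / c ω) hG hint hX hXzero
      (by fun_prop : Measurable[G] _).stronglyMeasurable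
      (by fun_prop : Measurable[G] _).stronglyMeasurable
      (hXc.mono fun _ h => Real.exp_mul_le_cosh_add_sinh_div_mul l h)
  filter_upwards [hcosh] with ω h
  exact h.trans ((Real.cosh_le_exp_half_sq _).trans_eq (by ring_nf))

/-- Conditional Hoeffding's lemma: if `E[X | G] = 0` and `|X| ≤ c` a.s. for a
nonnegative `G`-measurable `c`, then `E[exp (λX) | G] ≤ exp (λ²c²/2)` a.s. -/
theorem conditional_hoeffding
    {Ω : Type*} {mΩ : MeasurableSpace Ω} (P : Measure Ω) [IsProbabilityMeasure P]
    (G : MeasurableSpace Ω) (hG : G ≤ mΩ)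
    (X : Ω → ℝ) (hX : Integrable X P) (hXzero : P[X|G] =ᵐ[P] 0)
    (c : Ω → ℝ) (hc : StronglyMeasurable[G] c) (hc0 : ∀ ω, 0 ≤ c ω)
    (hXc : ∀ᵐ ω ∂P, |X ω| ≤ c ω) (l : ℝ) :
    P[fun ω => Real.exp (l * X ω)|G] ≤ᵐ[P] fun ω => Real.exp (l ^ 2 * c ω ^ 2 / 2) :=
  conditional_hoeffding_general P G hG X hX hXzero c hc hXc l
end

section
/- Let f : R^d → R be L-smooth. Fix x, u ∈ R^d, η > 0, α > 0, and set x' = x - η g where g = u u^T ∇f(x) + β u with |β| ≤ (Lα/2)‖u‖². Then f(x') ≤ f(x) - (η/2)(u^T ∇f(x))² + L η² ‖u‖² (u^T ∇f(x))² + (η β²)/2 + L η² β² ‖u‖². -/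
/-!
Write `s = ⟪u, ∇f x⟫`, so that `x' - x = -η (s + β) • u`. The descent lemma
`f y ≤ f x + ⟪∇f x, y - x⟫ + (L/2)‖y - x‖²`, obtained by comparing `t ↦ f (x + t (y - x))` with
its quadratic upper model on `[0, 1]`, gives
`f x' ≤ f x - η s² - η β s + (L/2) η² (s + β)² ‖u‖²`; the claim follows from
`-β s ≤ (β² + s²)/2` and `(s + β)² ≤ 2 s² + 2 β²`.
-/

open MeasureTheory InnerProductSpace

section Descent

variable {E : Type*} [NormedAddCommGroup E] [InnerProductSpace ℝ E] [CompleteSpace E]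
  {f : E → ℝ} {L : ℝ}

theorem hasDerivAt_comp_add_smul (hdiff : Differentiable ℝ f) (x v : E) (t : ℝ) :
    HasDerivAt (fun t : ℝ ↦ f (x + t • v)) ⟪gradient f (x + t • v), v⟫_ℝ t := by
  have hline : HasDerivAt (fun t : ℝ ↦ x + t • v) v t := by
    simpa using ((hasDerivAt_id t).smul_const v).const_add x
  have h := (hdiff (x + t • v)).hasGradientAt.hasFDerivAt.comp_hasDerivAt t hline
  rwa [toDual_apply_apply] at h

theorem inner_gradient_add_smul_le (hlip : ∀ x y, ‖gradient f y - gradient f x‖ ≤ L * ‖y - x‖)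
    (x v : E) {t : ℝ} (ht : 0 ≤ t) :
    ⟪gradient f (x + t • v), v⟫_ℝ ≤ ⟪gradient f x, v⟫_ℝ + L * t * ‖v‖ ^ 2 := by
  calc ⟪gradient f (x + t • v), v⟫_ℝ
      = ⟪gradient f x, v⟫_ℝ + ⟪gradient f (x + t • v) - gradient f x, v⟫_ℝ := by
        rw [inner_sub_left]; ring
    _ ≤ ⟪gradient f x, v⟫_ℝ + ‖gradient f (x + t • v) - gradient f x‖ * ‖v‖ := by
        gcongr; exact real_inner_le_norm _ _
    _ ≤ ⟪gradient f x, v⟫_ℝ + L * ‖t • v‖ * ‖v‖ := by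
        gcongr; simpa using hlip x (x + t • v)
    _ = ⟪gradient f x, v⟫_ℝ + L * t * ‖v‖ ^ 2 := by
        rw [norm_smul, Real.norm_of_nonneg ht]; ring

theorem le_add_inner_gradient_add_sq_norm (hdiff : Differentiable ℝ f)
    (hlip : ∀ x y, ‖gradient f y - gradient f x‖ ≤ L * ‖y - x‖) (x y : E) :
    f y ≤ f x + ⟪gradient f x, y - x⟫_ℝ + L / 2 * ‖y - x‖ ^ 2 := by
  set v := y - x
  have hB : ∀ t : ℝ, HasDerivAt (fun t ↦ f x + t * ⟪gradient f x, v⟫_ℝ + L / 2 * t ^ 2 * ‖v‖ ^ 2)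
      (⟪gradient f x, v⟫_ℝ + L * t * ‖v‖ ^ 2) t := by
    intro t
    have h := (((hasDerivAt_id t).mul_const ⟪gradient f x, v⟫_ℝ).const_add (f x)).add
      (((hasDerivAt_pow 2 t).const_mul (L / 2)).mul_const (‖v‖ ^ 2))
    exact h.congr_deriv (by push_cast; ring)
  have key := image_le_of_deriv_right_le_deriv_boundary
    (fun t _ ↦ (hasDerivAt_comp_add_smul hdiff x v t).continuousAt.continuousWithinAt)
    (fun t _ ↦ (hasDerivAt_comp_add_smul hdiff x v t).hasDerivWithinAt)
    (by simp) (fun t _ ↦ (hB t).continuousAt.continuousWithinAt)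
    (fun t _ ↦ (hB t).hasDerivWithinAt)
    (fun t ht ↦ inner_gradient_add_smul_le hlip x v ht.1)
    (Set.right_mem_Icc.mpr zero_le_one)
  simpa [v] using key

end Descent

theorem zeroth_order_descent_step_general {d : ℕ}
    (f : EuclideanSpace ℝ (Fin d) → ℝ) (L : ℝ) (hL : 0 < L)
    (hdiff : Differentiable ℝ f)
    (hlip : ∀ x y, ‖gradient f y - gradient f x‖ ≤ L * ‖y - x‖)
    (x u : EuclideanSpace ℝ (Fin d)) (η β : ℝ) (hη : 0 < η)
    (x' : EuclideanSpace ℝ (Fin d))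
    (hx' : x' = x - η • ((inner ℝ u (gradient f x) : ℝ) • u + β • u)) :
    f x' ≤ f x - η / 2 * (inner ℝ u (gradient f x) : ℝ) ^ 2
        + L * η ^ 2 * ‖u‖ ^ 2 * (inner ℝ u (gradient f x) : ℝ) ^ 2
        + η * β ^ 2 / 2 + L * η ^ 2 * β ^ 2 * ‖u‖ ^ 2 := by
  set s := ⟪u, gradient f x⟫_ℝ
  have hstep : x' - x = (-(η * (s + β))) • u := by
    rw [hx']
    module
  have hdescent := le_add_inner_gradient_add_sq_norm hdiff hlip x x'
  rw [hstep, real_inner_smul_right, real_inner_comm, norm_smul, mul_pow, Real.norm_eq_abs,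
    sq_abs] at hdescent
  have hyoung : -(β * s) ≤ (β ^ 2 + s ^ 2) / 2 := by nlinarith [sq_nonneg (β + s)]
  have hsq : (s + β) ^ 2 ≤ 2 * s ^ 2 + 2 * β ^ 2 := by nlinarith [sq_nonneg (s - β)]
  have hcoeff : 0 ≤ L / 2 * η ^ 2 * ‖u‖ ^ 2 := by positivity
  linarith [mul_le_mul_of_nonneg_left hyoung hη.le, mul_le_mul_of_nonneg_left hsq hcoeff]

/-- One-step descent bound for `L`-smooth `f` under the perturbed update
`x' = x - η (u uᵀ ∇f(x) + β u)` with `|β| ≤ (Lα/2)‖u‖²`. -/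
theorem zeroth_order_descent_step {d : ℕ}
    (f : EuclideanSpace ℝ (Fin d) → ℝ) (L : ℝ) (hL : 0 < L)
    (hdiff : Differentiable ℝ f)
    (hlip : ∀ x y, ‖gradient f y - gradient f x‖ ≤ L * ‖y - x‖)
    (x u : EuclideanSpace ℝ (Fin d)) (η α β : ℝ) (hη : 0 < η) (hα : 0 < α)
    (hβ : |β| ≤ L * α / 2 * ‖u‖ ^ 2)
    (x' : EuclideanSpace ℝ (Fin d))
    (hx' : x' = x - η • ((inner ℝ u (gradient f x) : ℝ) • u + β • u)) :
    f x' ≤ f x - η / 2 * (inner ℝ u (gradient f x) : ℝ) ^ 2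
        + L * η ^ 2 * ‖u‖ ^ 2 * (inner ℝ u (gradient f x) : ℝ) ^ 2
        + η * β ^ 2 / 2 + L * η ^ 2 * β ^ 2 * ‖u‖ ^ 2 :=
  zeroth_order_descent_step_general f L hL hdiff hlip x u η β hη x' hx'
end

section
/- Let f : R^d → R be L-smooth and μ-strongly convex with minimizer x*. Fix x, u ∈ R^d with ∇f(x) ≠ 0 and u ≠ 0, set η = 1/(4L‖u‖²), and x' = x - η(u u^T ∇f(x) + β u) with |β| ≤ (Lα/2)‖u‖². Then f(x') - f(x*) ≤ (1 - (μ/(8L)) (u^T ∇f(x))² / (‖u‖² ‖∇f(x)‖²)) (f(x) - f(x*)) + Δ_α, where Δ_α = ηβ²/2 + Lη²β²‖u‖². -/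
set_option maxHeartbeats 1000000


open MeasureTheory InnerProductSpace

private lemma descent_lemma {d : ℕ} (f : EuclideanSpace ℝ (Fin d) → ℝ) (L : ℝ)
    (hL : 0 < L) (hdiff : Differentiable ℝ f)
    (hlip : ∀ x y, ‖gradient f y - gradient f x‖ ≤ L * ‖y - x‖)
    (x v : EuclideanSpace ℝ (Fin d)) :
    f (x + v) ≤ f x + (inner ℝ (gradient f x) v : ℝ) + L / 2 * ‖v‖ ^ 2 := by
  set c : ℝ := inner ℝ (gradient f x) v with hc
  have hline : ∀ t : ℝ, HasDerivAt (fun t : ℝ => f (x + t • v))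
      ((inner ℝ (gradient f (x + t • v)) v : ℝ)) t := by
    intro t
    have h1 : HasDerivAt (fun t : ℝ => x + t • v) v t := by
      simpa using ((hasDerivAt_id t).smul_const v).const_add x
    have h2 := ((hdiff (x + t • v)).hasGradientAt).hasFDerivAt
    have := h2.comp_hasDerivAt t h1
    exact this.congr_deriv (by simp [InnerProductSpace.toDual_apply_apply])
  set φ : ℝ → ℝ := fun t => f (x + t • v) - t * c - L * t ^ 2 * ‖v‖ ^ 2 / 2 with hφdef
  have hφ : ∀ t : ℝ, HasDerivAt φ
      ((inner ℝ (gradient f (x + t • v)) v : ℝ) - c - L * t * ‖v‖ ^ 2) t := by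
    intro t
    have hq : HasDerivAt (fun t : ℝ => L * t ^ 2 * ‖v‖ ^ 2 / 2) (L * t * ‖v‖ ^ 2) t := by
      have := (((hasDerivAt_pow 2 t).const_mul L).mul_const (‖v‖ ^ 2)).div_const 2
      exact this.congr_deriv (by norm_num; ring)
    have hlin : HasDerivAt (fun t : ℝ => t * c) c t := by
      simpa using (hasDerivAt_id t).mul_const c
    exact ((hline t).sub hlin).sub hq
  have hmono : AntitoneOn φ (Set.Icc (0:ℝ) 1) := by
    apply antitoneOn_of_deriv_nonpos (convex_Icc 0 1)
    · exact fun t _ => ((hφ t).continuousAt).continuousWithinAt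
    · exact fun t _ => ((hφ t).differentiableAt).differentiableWithinAt
    · intro t ht
      rw [interior_Icc] at ht
      rw [(hφ t).deriv]
      have hcs : (inner ℝ (gradient f (x + t • v)) v : ℝ) - c ≤
          ‖gradient f (x + t • v) - gradient f x‖ * ‖v‖ := by
        have := real_inner_le_norm (gradient f (x + t • v) - gradient f x) v
        simpa [inner_sub_left, hc] using this
      have hl := hlip x (x + t • v)
      have : ‖x + t • v - x‖ = t * ‖v‖ := by
        simp [norm_smul, abs_of_pos ht.1]
      rw [this] at hl
      nlinarith [norm_nonneg v, mul_le_mul_of_nonneg_right hl (norm_nonneg v)]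
  have h01 := hmono (Set.left_mem_Icc.2 zero_le_one) (Set.right_mem_Icc.2 zero_le_one)
    zero_le_one
  simp only [hφdef] at h01
  norm_num at h01
  linarith

/-- One-step contraction bound for an `L`-smooth, `μ`-strongly convex `f` with
minimizer `x*`, step size `η = 1/(4L‖u‖²)` and perturbed zeroth-order update. -/
theorem zeroth_order_contraction_step {d : ℕ}
    (f : EuclideanSpace ℝ (Fin d) → ℝ) (L μ : ℝ) (hL : 0 < L) (hμ : 0 < μ)
    (hdiff : Differentiable ℝ f)
    (hlip : ∀ x y, ‖gradient f y - gradient f x‖ ≤ L * ‖y - x‖)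
    (hsc : ∀ x y, f x + inner ℝ (gradient f x) (y - x) + μ / 2 * ‖y - x‖ ^ 2 ≤ f y)
    (xs : EuclideanSpace ℝ (Fin d)) (hxs : ∀ y, f xs ≤ f y)
    (x u : EuclideanSpace ℝ (Fin d)) (hgrad : gradient f x ≠ 0) (hu : u ≠ 0)
    (η α β : ℝ) (hη : η = 1 / (4 * L * ‖u‖ ^ 2)) (hα : 0 < α)
    (hβ : |β| ≤ L * α / 2 * ‖u‖ ^ 2)
    (x' : EuclideanSpace ℝ (Fin d))
    (hx' : x' = x - η • ((inner ℝ u (gradient f x) : ℝ) • u + β • u)) :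
    f x' - f xs ≤
      (1 - μ / (8 * L) *
          (inner ℝ u (gradient f x) : ℝ) ^ 2 / (‖u‖ ^ 2 * ‖gradient f x‖ ^ 2)) *
        (f x - f xs)
      + (η * β ^ 2 / 2 + L * η ^ 2 * β ^ 2 * ‖u‖ ^ 2) := by
  set g : EuclideanSpace ℝ (Fin d) := gradient f x with hg
  set a : ℝ := inner ℝ u g with ha
  have hU : (0:ℝ) < ‖u‖ ^ 2 := pow_pos (norm_pos_iff.mpr hu) 2
  have hG : (0:ℝ) < ‖g‖ ^ 2 := pow_pos (norm_pos_iff.mpr hgrad) 2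
  have h4L : (0:ℝ) < 4 * L * ‖u‖ ^ 2 := by
    have : (0:ℝ) < 4 * L := by linarith
    exact mul_pos this hU
  have hηpos : 0 < η := by rw [hη]; exact div_pos one_pos h4L
  -- the step vector
  set v : EuclideanSpace ℝ (Fin d) := -(η • ((a + β) • u)) with hv
  have hx'2 : x' = x + v := by
    rw [hx', hv]
    module
  -- descent lemma
  have hdes := descent_lemma f L hL hdiff hlip x v
  rw [← hx'2] at hdes
  have hinner : (inner ℝ g v : ℝ) = -(η * (a + β) * a) := by
    rw [hv]
    rw [inner_neg_right, inner_smul_right, inner_smul_right]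
    have : (inner ℝ g u : ℝ) = a := by rw [ha, real_inner_comm]
    rw [this]; ring
  have hnv : ‖v‖ ^ 2 = η ^ 2 * (a + β) ^ 2 * ‖u‖ ^ 2 := by
    rw [hv, norm_neg, norm_smul, norm_smul]
    simp only [Real.norm_eq_abs, mul_pow, sq_abs]
    ring
  rw [hinner, hnv] at hdes
  -- PL / strong convexity: ‖g‖² ≥ 2μ(f x - f xs)
  have hPL : 2 * μ * (f x - f xs) ≤ ‖g‖ ^ 2 := by
    have h1 := hsc x xs
    have hcs : -(‖g‖ * ‖xs - x‖) ≤ (inner ℝ g (xs - x) : ℝ) := by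
      have := real_inner_le_norm g (x - xs)
      have h2 : (inner ℝ g (x - xs) : ℝ) = -(inner ℝ g (xs - x) : ℝ) := by
        rw [← inner_neg_right]; congr 1; abel
      rw [h2] at this
      have h3 : ‖x - xs‖ = ‖xs - x‖ := norm_sub_rev _ _
      linarith [h3 ▸ this]
    nlinarith [sq_nonneg (‖g‖ - μ * ‖xs - x‖), sq_nonneg ‖xs - x‖, mul_pos hμ hμ]
  have hFx : f xs ≤ f x := hxs x
  have hFx' : f xs ≤ f x' := hxs x'
  -- Lη²‖u‖² = η/4
  have hLη : L * η ^ 2 * ‖u‖ ^ 2 = η / 4 := by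
    rw [hη]; field_simp
  -- key: the contraction term is at most η a²/4
  have hkey : μ / (8 * L) * a ^ 2 / (‖u‖ ^ 2 * ‖g‖ ^ 2) * (f x - f xs) ≤ η * a ^ 2 / 4 := by
    have e1 : μ / (8 * L) * a ^ 2 / (‖u‖ ^ 2 * ‖g‖ ^ 2) * (f x - f xs)
        = (a ^ 2 / (8 * L * ‖u‖ ^ 2)) * (μ * (f x - f xs) / ‖g‖ ^ 2) := by
      field_simp
    have e2 : η * a ^ 2 / 4 = (a ^ 2 / (8 * L * ‖u‖ ^ 2)) * (1 / 2) := by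
      rw [hη]
      rw [div_mul_eq_mul_div, one_mul, div_div]
      have hLne : L ≠ 0 := hL.ne'
      have hUne : ‖u‖ ≠ 0 := norm_ne_zero_iff.2 hu
      field_simp
      ring
    rw [e1, e2]
    refine mul_le_mul_of_nonneg_left ?_ (by positivity)
    rw [div_le_iff₀ hG]
    linarith
  have e : L / 2 * (η ^ 2 * (a + β) ^ 2 * ‖u‖ ^ 2) = η / 8 * (a + β) ^ 2 := by
    linear_combination (a + β) ^ 2 / 2 * hLη
  rw [e] at hdes
  have hΔ : L * η ^ 2 * β ^ 2 * ‖u‖ ^ 2 = η / 4 * β ^ 2 := by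
    linear_combination β ^ 2 * hLη
  have hexp : (1 - μ / (8 * L) * a ^ 2 / (‖u‖ ^ 2 * ‖g‖ ^ 2)) * (f x - f xs)
      = (f x - f xs) - μ / (8 * L) * a ^ 2 / (‖u‖ ^ 2 * ‖g‖ ^ 2) * (f x - f xs) := by
    ring
  rw [hexp, hΔ]
  nlinarith [mul_nonneg hηpos.le (sq_nonneg (a + β)), mul_nonneg hηpos.le (sq_nonneg a),
    mul_nonneg hηpos.le (sq_nonneg β)]
end

section
/- Laurent–Massart weighted chi-square upper bound: Let X_1, ..., X_K be i.i.d. standard normal random variables and w_1, ..., w_K ≥ 0 deterministic weights. Then for any δ ∈ (0,1), with probability at least 1 - δ, ∑_{k=1}^K w_k X_k² ≤ ∑_{k=1}^K w_k + 2√((∑_{k=1}^K w_k²) log(1/δ)) + 2 (max_{1≤k≤K} w_k) log(1/δ). -/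
/-!
Chernoff's method. For a standard normal `X` and `c < 1/2`, `E exp (c X²) = (1 - 2c)^(-1/2)`, and
the logarithmic series gives `-½ log (1 - 2c) ≤ c + c² / (1 - 2c)`. By independence,
`Z = ∑ w_k X_k²` therefore satisfies `E exp (t Z) ≤ exp (t S + t² v / (1 - 2 t b))` for
`0 ≤ t < 1 / (2b)`, where `S = ∑ w_k`, `v = ∑ w_k²` and `b = max w_k`. For this sub-gamma bound
the choice `t = √s / (√v + 2 b √s)` turns the Chernoff bound into
`P (Z ≥ S + 2 √(v s) + 2 b s) ≤ exp (-s)`. Then take `s = log (1/δ)`.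
-/

open MeasureTheory ProbabilityTheory Finset Real

lemma neg_log_one_sub_le {x : ℝ} (h0 : 0 ≤ x) (h1 : x < 1) :
    -log (1 - x) ≤ x + x ^ 2 / (2 * (1 - x)) := by
  have hlog := (hasSum_nat_add_iff' 1).mpr
    (hasSum_pow_div_log_of_abs_lt_one (by rwa [abs_of_nonneg h0]))
  have hgeom := (hasSum_geometric_of_lt_one h0 h1).mul_left (x ^ 2 / 2)
  have htail := hasSum_le (fun n => ?_) hlog hgeom
  · simp only [sum_range_one, zero_add, Nat.cast_zero, pow_one, div_one] at htail
    have : x ^ 2 / 2 * (1 - x)⁻¹ = x ^ 2 / (2 * (1 - x)) := by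
      rw [mul_comm 2, ← div_div]; ring
    linarith
  · rw [div_mul_eq_mul_div, ← pow_add, add_comm 2 n]
    push_cast
    gcongr
    linarith [n.cast_nonneg (α := ℝ)]

lemma inv_sqrt_one_sub_two_mul_le_exp {c d : ℝ} (hc : 0 ≤ c) (hcd : c ≤ d) (hd : 2 * d < 1) :
    (√(1 - 2 * c))⁻¹ ≤ exp (c + c ^ 2 / (1 - 2 * d)) := by
  have hpos : 0 < 1 - 2 * c := by linarith
  have hlog := neg_log_one_sub_le (x := 2 * c) (by linarith) (by linarith)
  have hdiv : c ^ 2 / (1 - 2 * c) ≤ c ^ 2 / (1 - 2 * d) := by gcongr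
  rw [← exp_log (sqrt_pos.mpr hpos), ← exp_neg, log_sqrt hpos.le, exp_le_exp]
  have h4 : (2 * c) ^ 2 / (2 * (1 - 2 * c)) = 2 * (c ^ 2 / (1 - 2 * c)) := by
    field_simp
  linarith

lemma mgf_sq_gaussianReal {c : ℝ} (hc : c < 1 / 2) :
    mgf (fun x => x ^ 2) (gaussianReal 0 1) c = (√(1 - 2 * c))⁻¹ := by
  have hdensity : ∀ x : ℝ, gaussianPDFReal 0 1 x • exp (c * x ^ 2)
      = (√(2 * π))⁻¹ * exp (-(1 / 2 - c) * x ^ 2) := by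
    intro x
    simp only [gaussianPDFReal, NNReal.coe_one, mul_one, sub_zero, smul_eq_mul, mul_assoc,
      ← exp_add]
    ring_nf
  rw [mgf, integral_gaussianReal_eq_integral_smul one_ne_zero]
  simp_rw [hdensity]
  rw [integral_const_mul, integral_gaussian, ← sqrt_inv, ← sqrt_mul (by positivity), ← sqrt_inv]
  congr 1
  have : 1 - 2 * c ≠ 0 := by linarith
  field_simp

lemma mgf_mul_sq_of_map_eq_gaussianReal {Ω : Type*} [MeasurableSpace Ω] {P : Measure Ω}
    {X : Ω → ℝ} (hX : P.map X = gaussianReal 0 1) {w t : ℝ} (hwt : w * t < 1 / 2) :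
    mgf (fun ω => w * X ω ^ 2) P t = (√(1 - 2 * (w * t)))⁻¹ := by
  have hXm : AEMeasurable X P := aemeasurable_of_map_neZero (by rw [hX]; infer_instance)
  rw [mgf_const_mul, ← mgf_sq_gaussianReal hwt, ← hX, mgf_map hXm (by fun_prop)]
  rfl

section WeightedChiSquare

variable {Ω ι : Type*} [MeasurableSpace Ω] {P : Measure Ω} [Fintype ι] {X : ι → Ω → ℝ}

lemma mgf_sum_mul_sq_eq_prod (hindep : iIndepFun X P)
    (hlaw : ∀ i, P.map (X i) = gaussianReal 0 1) (w : ι → ℝ) {t : ℝ}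
    (hwt : ∀ i, w i * t < 1 / 2) :
    mgf (fun ω => ∑ i, w i * X i ω ^ 2) P t = ∏ i, (√(1 - 2 * (w i * t)))⁻¹ := by
  have hXm : ∀ i, AEMeasurable (X i) P :=
    fun i => aemeasurable_of_map_neZero (by rw [hlaw i]; infer_instance)
  have hYindep : iIndepFun (fun i ω => w i * X i ω ^ 2) P :=
    hindep.comp (fun i x => w i * x ^ 2) fun i => by fun_prop
  rw [← prod_congr rfl fun i _ => mgf_mul_sq_of_map_eq_gaussianReal (hlaw i) (hwt i)]
  convert hYindep.mgf_sum₀ (fun i => by fun_prop) univ using 2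
  ext ω
  simp

lemma integrable_exp_mul_sum_mul_sq (hindep : iIndepFun X P)
    (hlaw : ∀ i, P.map (X i) = gaussianReal 0 1) {w : ι → ℝ} {t : ℝ}
    (hwt : ∀ i, w i * t < 1 / 2) :
    Integrable (fun ω => exp (t * ∑ i, w i * X i ω ^ 2)) P := by
  have := hindep.isProbabilityMeasure
  rw [← mgf_pos_iff, mgf_sum_mul_sq_eq_prod hindep hlaw w hwt]
  exact prod_pos fun i _ => inv_pos.mpr (sqrt_pos.mpr (by linarith [hwt i]))

lemma mgf_sum_mul_sq_le (hindep : iIndepFun X P)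
    (hlaw : ∀ i, P.map (X i) = gaussianReal 0 1) {w : ι → ℝ} (hw : ∀ i, 0 ≤ w i) {b t : ℝ}
    (hwb : ∀ i, w i ≤ b) (ht : 0 ≤ t) (htb : 2 * t * b < 1) :
    mgf (fun ω => ∑ i, w i * X i ω ^ 2) P t
      ≤ exp (t * ∑ i, w i + t ^ 2 * (∑ i, w i ^ 2) / (1 - 2 * t * b)) := by
  have hwt : ∀ i, w i * t ≤ t * b := fun i => by rw [mul_comm]; gcongr; exact hwb i
  rw [mgf_sum_mul_sq_eq_prod hindep hlaw w fun i => by linarith [hwt i], mul_sum, mul_sum,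
    sum_div, ← sum_add_distrib, exp_sum]
  refine prod_le_prod (fun i _ => by positivity) fun i _ => ?_
  refine (inv_sqrt_one_sub_two_mul_le_exp (mul_nonneg (hw i) ht) (hwt i) (by linarith)).trans_eq ?_
  congr 1
  ring

end WeightedChiSquare

theorem measureReal_ge_le_exp_neg_of_mgf_le {Ω : Type*} [MeasurableSpace Ω] {P : Measure Ω}
    [IsFiniteMeasure P] {Z : Ω → ℝ} {m v b s : ℝ} (hv : 0 < v) (hb : 0 ≤ b) (hs : 0 < s)
    (hint : ∀ t, 0 ≤ t → 2 * t * b < 1 → Integrable (fun ω => exp (t * Z ω)) P)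
    (hmgf : ∀ t, 0 ≤ t → 2 * t * b < 1 →
      mgf Z P t ≤ exp (t * m + t ^ 2 * v / (1 - 2 * t * b))) :
    P.real {ω | m + 2 * √(v * s) + 2 * b * s ≤ Z ω} ≤ exp (-s) := by
  obtain ⟨σ, hσ, rfl⟩ : ∃ σ, 0 < σ ∧ v = σ ^ 2 := ⟨√v, sqrt_pos.mpr hv, (sq_sqrt hv.le).symm⟩
  obtain ⟨τ, hτ, rfl⟩ : ∃ τ, 0 < τ ∧ s = τ ^ 2 := ⟨√s, sqrt_pos.mpr hs, (sq_sqrt hs.le).symm⟩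
  rw [← mul_pow, sqrt_sq (by positivity)]
  set t := τ / (σ + 2 * b * τ) with ht_def
  have hD : 0 < σ + 2 * b * τ := by positivity
  have ht : 0 ≤ t := by positivity
  have hgap : 1 - 2 * t * b = σ / (σ + 2 * b * τ) := by
    rw [ht_def]; field_simp; ring
  have htb : 2 * t * b < 1 := by
    have : 0 < 1 - 2 * t * b := by rw [hgap]; positivity
    linarith
  calc P.real {ω | m + 2 * (σ * τ) + 2 * b * τ ^ 2 ≤ Z ω}
      ≤ exp (-t * (m + 2 * (σ * τ) + 2 * b * τ ^ 2)) * mgf Z P t :=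
        measure_ge_le_exp_mul_mgf _ ht (hint t ht htb)
    _ ≤ exp (-t * (m + 2 * (σ * τ) + 2 * b * τ ^ 2))
          * exp (t * m + t ^ 2 * σ ^ 2 / (1 - 2 * t * b)) := by
        gcongr; exact hmgf t ht htb
    _ = exp (-τ ^ 2) := by
        rw [← exp_add, hgap, ht_def]
        congr 1
        field_simp
        ring

lemma ofReal_one_sub_le_measure {Ω : Type*} [MeasurableSpace Ω] {P : Measure Ω}
    [IsProbabilityMeasure P] {s : Set Ω} {δ : ℝ} (h : P.real sᶜ ≤ δ) :
    ENNReal.ofReal (1 - δ) ≤ P s := by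
  rw [ENNReal.ofReal_le_iff_le_toReal (measure_ne_top _ _), ← measureReal_def]
  have := measureReal_union_le (μ := P) s sᶜ
  rw [Set.union_compl_self, probReal_univ] at this
  linarith

theorem laurent_massart_weighted_general
    {Ω : Type*} [MeasurableSpace Ω] (P : Measure Ω) [IsProbabilityMeasure P]
    (K : ℕ) (hK : 0 < K)
    (X : Fin K → Ω → ℝ)
    (hindep : iIndepFun X P)
    (hlaw : ∀ i, Measure.map (X i) P = gaussianReal 0 1)
    (w : Fin K → ℝ) (hw : ∀ i, 0 ≤ w i)
    (δ : ℝ) (hδ : δ ∈ Set.Ioo (0 : ℝ) 1) :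
    ENNReal.ofReal (1 - δ) ≤
      P {ω | ∑ i, w i * X i ω ^ 2 ≤
        ∑ i, w i + 2 * Real.sqrt ((∑ i, w i ^ 2) * Real.log (1 / δ))
          + 2 * (Finset.univ.sup' (Finset.univ_nonempty_iff.mpr ⟨⟨0, hK⟩⟩) w)
            * Real.log (1 / δ)} := by
  obtain ⟨hδ0, hδ1⟩ := hδ
  set b := univ.sup' (univ_nonempty_iff.mpr ⟨⟨0, hK⟩⟩) w
  have hwb : ∀ i, w i ≤ b := fun i => le_sup' w (mem_univ i)
  have hb : 0 ≤ b := (hw _).trans (hwb ⟨0, hK⟩)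
  have hlog : 0 < log (1 / δ) := log_pos (by rw [one_div]; exact one_lt_inv_iff₀.mpr ⟨hδ0, hδ1⟩)
  refine ofReal_one_sub_le_measure ?_
  rcases (sum_nonneg fun i _ => sq_nonneg (w i) : 0 ≤ ∑ i, w i ^ 2).eq_or_lt with hv | hv
  · have hw0 : ∀ i, w i = 0 := fun i => pow_eq_zero_iff two_ne_zero |>.mp
      ((sum_eq_zero_iff_of_nonneg fun j _ => sq_nonneg (w j)).mp hv.symm i (mem_univ i))
    rw [Set.compl_empty_iff.mpr (Set.eq_univ_of_forall fun ω => ?_), measureReal_empty]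
    · exact hδ0.le
    · simp only [hw0, zero_mul, sum_const_zero, zero_add]
      exact add_nonneg (by positivity) (mul_nonneg (mul_nonneg zero_le_two hb) hlog.le)
  · have hwt : ∀ t, 0 ≤ t → 2 * t * b < 1 → ∀ i, w i * t < 1 / 2 := fun t ht htb i => by
      nlinarith [hwb i]
    have htail := measureReal_ge_le_exp_neg_of_mgf_le (P := P) hv hb hlog
      (fun t ht htb => integrable_exp_mul_sum_mul_sq hindep hlaw (hwt t ht htb))
      (fun t ht htb => mgf_sum_mul_sq_le hindep hlaw hw hwb ht htb)
    refine (measureReal_mono fun ω hω => ?_).trans (htail.trans_eq ?_)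
    · rw [Set.mem_compl_iff, Set.mem_ofPred_eq, not_le] at hω
      exact hω.le
    · rw [one_div, log_inv, neg_neg, exp_log hδ0]

/-- Laurent–Massart weighted chi-square upper bound: for i.i.d. standard
normals `X_1, …, X_K` and deterministic nonnegative weights `w`, with
probability at least `1 - δ`,
`∑ w_k X_k² ≤ ∑ w_k + 2√((∑ w_k²) log (1/δ)) + 2 (max_k w_k) log (1/δ)`. -/
theorem laurent_massart_weighted
    {Ω : Type*} [MeasurableSpace Ω] (P : Measure Ω) [IsProbabilityMeasure P]
    (K : ℕ) (hK : 0 < K)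
    (X : Fin K → Ω → ℝ) (hmeas : ∀ i, Measurable (X i))
    (hindep : iIndepFun X P)
    (hlaw : ∀ i, Measure.map (X i) P = gaussianReal 0 1)
    (w : Fin K → ℝ) (hw : ∀ i, 0 ≤ w i)
    (δ : ℝ) (hδ : δ ∈ Set.Ioo (0 : ℝ) 1) :
    ENNReal.ofReal (1 - δ) ≤
      P {ω | ∑ i, w i * X i ω ^ 2 ≤
        ∑ i, w i + 2 * Real.sqrt ((∑ i, w i ^ 2) * Real.log (1 / δ))
          + 2 * (Finset.univ.sup' (Finset.univ_nonempty_iff.mpr ⟨⟨0, hK⟩⟩) w)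
            * Real.log (1 / δ)} :=
  laurent_massart_weighted_general P K hK X hindep hlaw w hw δ hδ
end
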